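/- For every x ≥ 0, lim_{α→1⁻} W(-2x, -α/2, 1) = erfc(x), and this convergence is uniform on compact subsets of [0,∞); here erfc(x) = 1 - (2/√π) ∫_0^x e^{-z²} dz is the complementary error function. -/

import Mathlib

open MeasureTheory Filter Topology Set

/-- Riemann–Liouville fractional integral of order `α` with base point `a`:
`(I_a^α f)(t) = (1/Γ(α)) ∫_a^t (t-τ)^(α-1) f(τ) dτ`. -/
noncomputable def rlInt (a α : ℝ) (f : ℝ → ℝ) (t : ℝ) : ℝ :=
  (1 / Real.Gamma α) * ∫ τ in a..t, (t - τ) ^ (α - 1) * f τ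

/-- Riemann–Liouville fractional derivative of order `α ∈ (0,1)` with base point `a`:
`(D_a^{RL,α} f)(t) = d/dt (I_a^{1-α} f)(t)`. -/
noncomputable def rlDeriv (a α : ℝ) (f : ℝ → ℝ) (t : ℝ) : ℝ :=
  deriv (rlInt a (1 - α) f) t

/-- Caputo fractional derivative of order `α ∈ (0,1)` with base point `a`:
`(D_a^{C,α} f)(t) = (1/Γ(1-α)) ∫_a^t (t-τ)^(-α) f'(τ) dτ`. -/
noncomputable def caputoDeriv (a α : ℝ) (f : ℝ → ℝ) (t : ℝ) : ℝ :=
  (1 / Real.Gamma (1 - α)) * ∫ τ in a..t, (t - τ) ^ (-α) * deriv f τ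

/-- Absolute continuity of `f` on `[a,b]`, via the integral characterization:
`f(t) = f(a) + ∫_a^t g` for some integrable `g`. -/
def AbsContOn (f : ℝ → ℝ) (a b : ℝ) : Prop :=
  ∃ g : ℝ → ℝ, IntervalIntegrable g MeasureTheory.volume a b ∧
    ∀ t ∈ Set.Icc a b, f t = f a + ∫ τ in a..t, g τ

/-- The Wright function `W(x,ρ,β) = ∑_{k} x^k / (k! Γ(ρk+β))`. -/
noncomputable def wright (x ρ β : ℝ) : ℝ :=
  ∑' k : ℕ, x ^ k / ((Nat.factorial k : ℝ) * Real.Gamma (ρ * (k : ℝ) + β))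

/-- The error function `erf(x) = (2/√π) ∫_0^x e^{-z²} dz`. -/
noncomputable def erfReal (x : ℝ) : ℝ :=
  (2 / Real.sqrt Real.pi) * ∫ z in (0:ℝ)..x, Real.exp (-z ^ 2)

/-!
At `α = 1` the Wright series is the error-function series: its even terms `k ≥ 2` vanish because
`1/Γ` is zero at the nonpositive integers, and by `Γ(1/2 - m) (2m)! = (-4)^m m! √π` its odd terms
are the termwise integrals of the exponential series of `e^{-z²}`.

For `α ∈ [0, 1]` the reflection formula gives `|1/Γ(1 - αk/2)| ≤ Γ(αk/2 + 1) ≤ 1 + Γ(k/2 + 1)`,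
and `∑ R^k Γ(k/2 + 1) / k!` converges by the ratio test (log-convexity of `Γ` bounds
`Γ(y + 1/2) ≤ √y Γ(y)`). So the series converges uniformly on `[0, 1] × K`, its sum is jointly
continuous there, hence uniformly continuous on this compact set, which is the uniform convergence
as `α → 1`.
-/

open Real
open scoped Nat

lemma continuous_inv_Gamma : Continuous fun x : ℝ => (Gamma x)⁻¹ := by
  have h : (fun x : ℝ => (Gamma x)⁻¹) = fun x : ℝ => ((Complex.Gamma x)⁻¹).re := by
    funext x
    rw [Complex.Gamma_ofReal, ← Complex.ofReal_inv, Complex.ofReal_re]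
  rw [h]
  exact Complex.continuous_re.comp
    (Complex.differentiable_one_div_Gamma.continuous.comp Complex.continuous_ofReal)

lemma abs_inv_Gamma_one_sub_le {s : ℝ} (hs : 0 ≤ s) : |(Gamma (1 - s))⁻¹| ≤ Gamma (s + 1) := by
  rcases hs.eq_or_lt with rfl | hs
  · simp
  have hΓ : 0 < Gamma s := Gamma_pos_of_pos hs
  -- reflection formula; where `sin (π s) = 0` both sides vanish by the convention `π / 0 = 0`
  have hrefl : (Gamma (1 - s))⁻¹ = Gamma s * sin (π * s) / π := by
    rw [mul_div_assoc, ← inv_div, ← Gamma_mul_Gamma_one_sub, mul_inv, ← mul_assoc,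
      mul_inv_cancel₀ hΓ.ne', one_mul]
  calc |(Gamma (1 - s))⁻¹| = Gamma s * |sin (π * s)| / π := by
        rw [hrefl, abs_div, abs_mul, abs_of_pos hΓ, abs_of_pos pi_pos]
    _ ≤ Gamma s * (π * s) / π := by
        gcongr
        exact abs_sin_le_abs.trans (abs_of_pos (by positivity)).le
    _ = Gamma (s + 1) := by rw [Gamma_add_one hs.ne']; field_simp

lemma Gamma_add_one_le_max {s t : ℝ} (hs : 0 ≤ s) (hst : s ≤ t) :
    Gamma (s + 1) ≤ max 1 (Gamma (t + 1)) := by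
  simpa using convexOn_Gamma.le_max_of_mem_Icc (x := 1) (y := t + 1) (z := s + 1)
    (mem_Ioi.mpr one_pos) (mem_Ioi.mpr (by linarith)) ⟨by linarith, by linarith⟩

lemma Gamma_add_half_le {x : ℝ} (hx : 0 < x) : Gamma (x + 1 / 2) ≤ √x * Gamma x := by
  have h := Gamma_mul_add_mul_le_rpow_Gamma_mul_rpow_Gamma hx (by linarith : 0 < x + 1)
    one_half_pos one_half_pos (add_halves 1)
  rw [Gamma_add_one hx.ne', ← sqrt_eq_rpow, ← sqrt_eq_rpow, ← sqrt_mul (Gamma_pos_of_pos hx).le,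
    show Gamma x * (x * Gamma x) = x * Gamma x ^ 2 by ring, sqrt_mul hx.le,
    sqrt_sq (Gamma_pos_of_pos hx).le] at h
  convert h using 2
  ring

lemma summable_pow_mul_Gamma_half_add_one_div_factorial (R : ℝ) :
    Summable fun k : ℕ => R ^ k * Gamma (k / 2 + 1) / k ! := by
  refine summable_of_ratio_norm_eventually_le one_half_lt_one ?_
  filter_upwards [eventually_ge_atTop ⌈4 * R ^ 2⌉₊] with k hk
  have hk : 4 * R ^ 2 ≤ k := Nat.ceil_le.mp hk
  set y : ℝ := k / 2 + 1 with hy_def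
  have hy : 0 < y := by positivity
  -- the ratio of consecutive terms is at most `|R| √y / (k + 1)`, which tends to `0`
  have hratio : |R| * √y ≤ (k + 1) / 2 := by
    rw [← sqrt_sq_eq_abs, ← sqrt_mul (sq_nonneg R)]
    refine sqrt_le_iff.mpr ⟨by positivity, ?_⟩
    have hk0 : (0:ℝ) ≤ k := k.cast_nonneg
    nlinarith [mul_le_mul_of_nonneg_right hk hy.le, hy_def]
  have hΓ : Gamma ((k + 1 : ℕ) / 2 + 1) ≤ √y * Gamma y := by
    convert Gamma_add_half_le hy using 2
    push_cast; ring
  simp only [norm_div, norm_mul, norm_pow, Real.norm_eq_abs, abs_of_pos (Gamma_pos_of_pos hy),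
    Nat.abs_cast, abs_of_pos (Gamma_pos_of_pos (by positivity : (0:ℝ) < (k + 1 : ℕ) / 2 + 1))]
  rw [Nat.factorial_succ, Nat.cast_mul, pow_succ]
  calc |R| ^ k * |R| * Gamma ((k + 1 : ℕ) / 2 + 1) / ((k + 1 : ℕ) * k !)
      ≤ |R| ^ k * |R| * (√y * Gamma y) / ((k + 1 : ℕ) * k !) := by gcongr
    _ = |R| * √y / (k + 1) * (|R| ^ k * Gamma y / k !) := by push_cast; field_simp
    _ ≤ (k + 1) / 2 / (k + 1) * (|R| ^ k * Gamma y / k !) := by gcongr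
    _ = 1 / 2 * (|R| ^ k * Gamma y / k !) := by field_simp

lemma abs_inv_Gamma_mul_add_one_le {ρ : ℝ} (hρ : ρ ∈ Icc (-(1 / 2)) 0) (k : ℕ) :
    |(Gamma (ρ * k + 1))⁻¹| ≤ 1 + Gamma (k / 2 + 1) := by
  have hs : 0 ≤ -ρ * k := mul_nonneg (by linarith [hρ.2]) k.cast_nonneg
  have hsk : -ρ * k ≤ k / 2 := by nlinarith [hρ.1, k.cast_nonneg (α := ℝ)]
  calc |(Gamma (ρ * k + 1))⁻¹| = |(Gamma (1 - -ρ * k))⁻¹| := by ring_nf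
    _ ≤ max 1 (Gamma (k / 2 + 1)) :=
        (abs_inv_Gamma_one_sub_le hs).trans (Gamma_add_one_le_max hs hsk)
    _ ≤ 1 + Gamma (k / 2 + 1) :=
        max_le (by linarith [Gamma_pos_of_pos (by positivity : (0:ℝ) < k / 2 + 1)]) (by linarith)

lemma continuousOn_wright_one (R : ℝ) :
    ContinuousOn (fun p : ℝ × ℝ => wright p.1 p.2 1)
      (Metric.closedBall 0 R ×ˢ Icc (-(1 / 2)) 0) := by
  have hterm (k : ℕ) (p : ℝ × ℝ) :
      p.1 ^ k / (k ! * Gamma (p.2 * k + 1)) = p.1 ^ k / k ! * (Gamma (p.2 * k + 1))⁻¹ := by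
    rw [div_mul_eq_div_div, div_eq_mul_inv (p.1 ^ k / k !)]
  refine continuousOn_tsum (u := fun k : ℕ => R ^ k / k ! * (1 + Gamma (k / 2 + 1)))
    (fun k => ?_) ?_ (fun k p hp => ?_)
  · simp_rw [hterm]
    exact (Continuous.continuousOn (by fun_prop)).mul
      (continuous_inv_Gamma.comp (by fun_prop)).continuousOn
  · refine ((summable_pow_div_factorial R).add
      (summable_pow_mul_Gamma_half_add_one_div_factorial R)).congr fun k => ?_
    ring
  · have hR : |p.1| ≤ R := by simpa using hp.1
    rw [hterm, norm_mul, norm_div, norm_pow, Real.norm_eq_abs, Real.norm_eq_abs, Real.norm_eq_abs,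
      Nat.abs_cast]
    have hR0 : 0 ≤ R := (abs_nonneg _).trans hR
    gcongr
    exact abs_inv_Gamma_mul_add_one_le hp.2 k

lemma hasSum_integral_exp_neg_sq (x : ℝ) :
    HasSum (fun m : ℕ => (-1) ^ m * x ^ (2 * m + 1) / ((2 * m + 1) * m !))
      (∫ z in (0:ℝ)..x, exp (-z ^ 2)) := by
  have hterm (m : ℕ) : ∫ z in (0:ℝ)..x, (-z ^ 2) ^ m / m ! =
      (-1) ^ m * x ^ (2 * m + 1) / ((2 * m + 1) * m !) := by
    have hz (z : ℝ) : (-z ^ 2) ^ m / m ! = (-1) ^ m / m ! * z ^ (2 * m) := by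
      rw [neg_pow, pow_mul]; ring
    simp_rw [hz, intervalIntegral.integral_const_mul, integral_pow]
    push_cast
    field_simp
    ring
  simp_rw [← hterm]
  refine intervalIntegral.hasSum_integral_of_dominated_convergence
    (fun m _ => (x ^ 2) ^ m / m !) (fun m => (by fun_prop : Continuous _).aestronglyMeasurable)
    (fun m => ae_of_all _ fun t ht => ?_) (ae_of_all _ fun _ _ => summable_pow_div_factorial _)
    intervalIntegrable_const (ae_of_all _ fun t _ => ?_)
  · have ht2 : t ^ 2 ≤ x ^ 2 := by
      rcases Set.mem_uIoc.mp ht with h | h <;> nlinarith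
    rw [norm_div, norm_pow, norm_neg, Real.norm_eq_abs, Real.norm_eq_abs, abs_sq, Nat.abs_cast]
    gcongr
  · rw [exp_eq_exp_ℝ]
    exact NormedSpace.expSeries_div_hasSum_exp _

lemma Gamma_one_half_sub_nat_mul_factorial (m : ℕ) :
    Gamma (1 / 2 - m) * (2 * m) ! = (-4) ^ m * m ! * √π := by
  induction m with
  | zero => rw [Nat.cast_zero, sub_zero, Gamma_one_half_eq]; simp
  | succ m ih =>
    have hrec := Gamma_add_one (s := 1 / 2 - (m + 1 : ℕ))
      (by push_cast; linarith [m.cast_nonneg (α := ℝ)])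
    rw [show (1 / 2 - (m + 1 : ℕ) + 1 : ℝ) = 1 / 2 - m by push_cast; ring] at hrec
    rw [show 2 * (m + 1) = 2 * m + 1 + 1 by ring, Nat.factorial_succ, Nat.factorial_succ,
      Nat.factorial_succ]
    push_cast at hrec ⊢
    linear_combination (-4 * (m + 1)) * ih + (4 * (m + 1) * ((2 * m) ! : ℝ)) * hrec

lemma wright_neg_two_mul_neg_half_one (x : ℝ) :
    wright (-(2 * x)) (-(1 / 2)) 1 = 1 - erfReal x := by
  set f : ℕ → ℝ := fun k => (-(2 * x)) ^ k / (k ! * Gamma (-(1 / 2) * k + 1))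
  have heven : HasSum (fun m => f (2 * m)) 1 := by
    convert hasSum_single 0 fun m hm => ?_
    · simp [f]
    obtain ⟨n, rfl⟩ := Nat.exists_eq_succ_of_ne_zero hm
    have : -(1 / 2) * ((2 * (n + 1) : ℕ) : ℝ) + 1 = -n := by push_cast; ring
    simp only [f, this, Gamma_neg_nat_eq_zero, mul_zero, div_zero]
  have hcoef (m : ℕ) :
      f (2 * m + 1) = -(2 / √π) * ((-1) ^ m * x ^ (2 * m + 1) / ((2 * m + 1) * m !)) := by
    have harg : -(1 / 2) * ((2 * m + 1 : ℕ) : ℝ) + 1 = 1 / 2 - m := by push_cast; ring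
    have hΓ : Gamma (1 / 2 - m) = (-1) ^ m * 4 ^ m * m ! * √π / (2 * m) ! := by
      rw [eq_div_iff (by positivity), Gamma_one_half_sub_nat_mul_factorial, neg_pow]
    have hpow : (-(2 * x)) ^ (2 * m + 1) = -(2 * x) * 4 ^ m * x ^ (2 * m) := by
      rw [pow_succ, pow_mul, pow_mul, neg_sq, mul_pow]; norm_num; ring
    simp only [f]
    rw [harg, hΓ, hpow, Nat.factorial_succ]
    push_cast
    rcases neg_one_pow_eq_or ℝ m with h | h <;> rw [h] <;> field_simp <;> ring
  have hodd : HasSum (fun m => f (2 * m + 1)) (-erfReal x) := by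
    simp_rw [hcoef, erfReal, ← neg_mul]
    exact (hasSum_integral_exp_neg_sq x).mul_left _
  exact (heven.even_add_odd hodd).tsum_eq.trans (sub_eq_add_neg _ _).symm

lemma tendstoUniformlyOn_wright_neg_two_mul {K : Set ℝ} (hK : IsCompact K) :
    TendstoUniformlyOn (fun α x : ℝ => wright (-(2 * x)) (-(α / 2)) 1) (fun x => 1 - erfReal x)
      (𝓝[Ioo 0 1] 1) K := by
  obtain ⟨R, hR⟩ := hK.isBounded.subset_closedBall 0
  have hcont : ContinuousOn (↿fun α x : ℝ => wright (-(2 * x)) (-(α / 2)) 1) (Icc 0 1 ×ˢ K) := by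
    refine (continuousOn_wright_one (2 * R)).comp
      (by fun_prop : Continuous fun p : ℝ × ℝ => (-(2 * p.2), -(p.1 / 2))).continuousOn
      fun p hp => ⟨?_, by linarith [hp.1.2], by linarith [hp.1.1]⟩
    have hx : |p.2| ≤ R := by simpa using hR hp.2
    rw [Metric.mem_closedBall, dist_zero_right, norm_neg, norm_mul, Real.norm_two,
      Real.norm_eq_abs]
    linarith
  have h := ((isCompact_Icc.prod hK).uniformContinuousOn_of_continuous hcont).tendstoUniformlyOn
    (right_mem_Icc.mpr zero_le_one)
  rw [show (fun x : ℝ => wright (-(2 * x)) (-(1 / 2)) 1) = fun x => 1 - erfReal x from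
    funext wright_neg_two_mul_neg_half_one] at h
  exact fun u hu => nhdsWithin_mono _ Ioo_subset_Icc_self (h u hu)

/-- `W(-2x,-α/2,1)` converges to `erfc(x) = 1 - erf(x)` as `α → 1⁻`,
pointwise on `[0,∞)` and uniformly on compact subsets of `[0,∞)`. -/
theorem wright_tendsto_erfc :
    (∀ x : ℝ, 0 ≤ x →
      Filter.Tendsto (fun α : ℝ => wright (-(2 * x)) (-(α / 2)) 1)
        (nhdsWithin 1 (Set.Ioo (0:ℝ) 1))
        (nhds (1 - erfReal x))) ∧
    (∀ K : Set ℝ, K ⊆ Set.Ici 0 → IsCompact K →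
      TendstoUniformlyOn (fun (α : ℝ) (x : ℝ) => wright (-(2 * x)) (-(α / 2)) 1)
        (fun x => 1 - erfReal x)
        (nhdsWithin 1 (Set.Ioo (0:ℝ) 1)) K) :=
  ⟨fun _ _ => (tendstoUniformlyOn_wright_neg_two_mul isCompact_singleton).tendsto_at rfl,
    fun _ _ hK => tendstoUniformlyOn_wright_neg_two_mul hK⟩
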